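/- Let α, γ be real numbers with γ not an integer. Then for all real t: ₁F₁(α; γ; t) · ₁F₁(1−α; 1−γ; −t) − ( (γ−α) t / ( γ(γ−1) ) ) · ₁F₁(1−α; 2−γ; −t) · ₁F₁(α; γ+1; t) = 1. -/

import Mathlib

open Finset

/-- Pochhammer symbol `(a)ₙ = a(a+1)⋯(a+n-1)` for natural `n`. -/
noncomputable def poch (a : ℝ) (n : ℕ) : ℝ := Polynomial.eval a (ascPochhammer ℝ n)

/-- Pochhammer symbol `(a)ₖ` for integer `k`: for `k ≥ 0` the ascending product,
and `(a)₋ₖ = (-1)ᵏ/(1-a)ₖ` for `k ≥ 0`. -/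
noncomputable def pochZ (a : ℝ) (k : ℤ) : ℝ :=
  if 0 ≤ k then poch a k.toNat else (-1) ^ (-k).toNat / poch (1 - a) (-k).toNat

/-- The (generally non-terminating) Clausen series `₃F₂(a,b,c;d,e;1)`. -/
noncomputable def F32 (a b c d e : ℝ) : ℝ :=
  ∑' n : ℕ, poch a n * poch b n * poch c n / (poch d n * poch e n * n.factorial)

/-- A terminating `₃F₂(a,b,c;d,e;1)` summed over `k = 0, …, N`. -/
noncomputable def F32sum (N : ℕ) (a b c d e : ℝ) : ℝ :=
  ∑ k ∈ Finset.range (N + 1),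
    poch a k * poch b k * poch c k / (poch d k * poch e k * k.factorial)

/-- The Kummer confluent hypergeometric function `₁F₁(a;b;x)`. -/
noncomputable def F11 (a b x : ℝ) : ℝ :=
  ∑' n : ℕ, poch a n * x ^ n / (poch b n * n.factorial)

open Filter Topology

/-!
Both products are Cauchy products of power series in `t`. The constant term of the first is `1`,
and the coefficient of `t ^ (n + 1)` in the first is `(γ - α) / (γ * (γ - 1))` times the
coefficient of `t ^ n` in the second. For the latter, weight each summand `(k, l)` of the
antidiagonal sum for `n + 1` by `(k + l) / (n + 1) = 1` and shift indices; the summands then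
combine in pairs through
`(α + k) / (γ + k) - (1 - α + l) / (1 - γ + l) = (k + l + 1) (α - γ) / ((γ + k) (1 - γ + l))`.
-/

lemma poch_zero (a : ℝ) : poch a 0 = 1 := by simp [poch]

lemma poch_succ (a : ℝ) (n : ℕ) : poch a (n + 1) = poch a n * (a + n) := by
  simp [poch, ascPochhammer_succ_eval]

lemma mul_poch_add_one (b : ℝ) (n : ℕ) : b * poch (b + 1) n = poch b n * (b + n) := by
  rw [← poch_succ]
  simp [poch, ascPochhammer_succ_left, Polynomial.eval_comp]

noncomputable def kummerCoeff (a b : ℝ) (n : ℕ) : ℝ := poch a n / (poch b n * n.factorial)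

lemma kummerCoeff_zero (a b : ℝ) : kummerCoeff a b 0 = 1 := by
  simp [kummerCoeff, poch_zero]

lemma kummerCoeff_succ (a b : ℝ) (n : ℕ) :
    kummerCoeff a b (n + 1) = kummerCoeff a b n * ((a + n) / (b + n) / (n + 1)) := by
  simp only [kummerCoeff, poch_succ, Nat.factorial_succ, Nat.cast_mul, Nat.cast_succ]
  field_simp

lemma kummerCoeff_add_one_right (a : ℝ) {b : ℝ} (hb : b ≠ 0) (n : ℕ) :
    kummerCoeff a (b + 1) n = kummerCoeff a b n * (b / (b + n)) := by
  have h : poch (b + 1) n = poch b n * (b + n) / b := by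
    rw [← mul_poch_add_one]; field_simp
  rw [kummerCoeff, kummerCoeff, h]
  field_simp

lemma summable_norm_of_succ_eq_mul {f r : ℕ → ℝ} (hf : ∀ n, f (n + 1) = r n * f n)
    (hr : Tendsto r atTop (𝓝 0)) : Summable fun n ↦ ‖f n‖ := by
  refine summable_of_ratio_norm_eventually_le (r := 1 / 2) (by norm_num) ?_
  have hr' : Tendsto (fun n ↦ ‖r n‖) atTop (𝓝 0) := by simpa using hr.norm
  filter_upwards [hr'.eventually_le_const (by norm_num : (0 : ℝ) < 1 / 2)] with n hn
  rw [norm_norm, norm_norm, hf, norm_mul]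
  exact mul_le_mul_of_nonneg_right hn (norm_nonneg _)

-- No condition on `b`: if `b + m = 0`, then `poch b n = 0` for `n > m`, and `x / 0 = 0`.
lemma summable_norm_kummerCoeff_mul_pow (a b x : ℝ) :
    Summable fun n ↦ ‖kummerCoeff a b n * x ^ n‖ := by
  refine summable_norm_of_succ_eq_mul (r := fun n : ℕ ↦ x * ((a + n) / (b + n)) * (1 / (n + 1)))
    (fun n ↦ by rw [kummerCoeff_succ, pow_succ]; ring) ?_
  have hlim : Tendsto (fun n : ℕ ↦ x * ((a + 1 * n) / (b + 1 * n)) * (1 / ((n : ℝ) + 1)))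
      atTop (𝓝 (x * (1 / 1) * 0)) :=
    ((tendsto_add_mul_div_add_mul_atTop_nhds a b 1 one_ne_zero).const_mul x).mul
      tendsto_one_div_add_atTop_nhds_zero_nat
  simpa only [one_mul, mul_zero] using hlim

lemma hasSum_mul_tsum_pow {p q : ℕ → ℝ} {x : ℝ} (hp : Summable fun n ↦ ‖p n * x ^ n‖)
    (hq : Summable fun n ↦ ‖q n * x ^ n‖) :
    HasSum (fun n ↦ (∑ kl ∈ antidiagonal n, p kl.1 * q kl.2) * x ^ n)
      ((∑' n, p n * x ^ n) * ∑' n, q n * x ^ n) := by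
  have hterm : ∀ n, ∑ kl ∈ antidiagonal n, p kl.1 * x ^ kl.1 * (q kl.2 * x ^ kl.2) =
      (∑ kl ∈ antidiagonal n, p kl.1 * q kl.2) * x ^ n := by
    intro n
    rw [sum_mul]
    refine sum_congr rfl fun kl hkl ↦ ?_
    rw [← mem_antidiagonal.mp hkl, pow_add]
    ring
  simp_rw [← hterm]
  rw [tsum_mul_tsum_eq_tsum_sum_antidiagonal_of_summable_norm hp hq]
  exact (summable_norm_sum_mul_antidiagonal_of_summable_norm hp hq).of_norm.hasSum

lemma succ_mul_sum_antidiagonal_succ (f : ℕ → ℕ → ℝ) (n : ℕ) :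
    (n + 1) * ∑ kl ∈ antidiagonal (n + 1), f kl.1 kl.2 =
      ∑ kl ∈ antidiagonal n, ((kl.1 + 1) * f (kl.1 + 1) kl.2 + (kl.2 + 1) * f kl.1 (kl.2 + 1)) := by
  have hsplit : (n + 1) * ∑ kl ∈ antidiagonal (n + 1), f kl.1 kl.2 =
      ∑ kl ∈ antidiagonal (n + 1), (kl.1 : ℝ) * f kl.1 kl.2 +
        ∑ kl ∈ antidiagonal (n + 1), (kl.2 : ℝ) * f kl.1 kl.2 := by
    rw [mul_sum, ← sum_add_distrib]
    refine sum_congr rfl fun kl hkl ↦ ?_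
    have hkl' : ((kl.1 : ℝ) + kl.2) = n + 1 := by exact_mod_cast mem_antidiagonal.mp hkl
    rw [← add_mul, hkl']
  rw [hsplit, Nat.sum_antidiagonal_succ, Nat.sum_antidiagonal_succ', sum_add_distrib]
  push_cast
  ring

noncomputable def kummerProdCoeff (a b c d : ℝ) (n : ℕ) : ℝ :=
  ∑ kl ∈ antidiagonal n, kummerCoeff a b kl.1 * ((-1) ^ kl.2 * kummerCoeff c d kl.2)

lemma kummerProdCoeff_zero (a b c d : ℝ) : kummerProdCoeff a b c d 0 = 1 := by
  simp [kummerProdCoeff, kummerCoeff_zero]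

lemma hasSum_kummerProdCoeff (a b c d x : ℝ) :
    HasSum (fun n ↦ kummerProdCoeff a b c d n * x ^ n) (F11 a b x * F11 c d (-x)) := by
  have hF11 : ∀ a b x, F11 a b x = ∑' n, kummerCoeff a b n * x ^ n := fun a b x ↦
    tsum_congr fun n ↦ by rw [kummerCoeff, div_mul_eq_mul_div]
  have hF11_neg : F11 c d (-x) = ∑' n, (-1) ^ n * kummerCoeff c d n * x ^ n := by
    rw [hF11]
    exact tsum_congr fun n ↦ by rw [neg_pow]; ring
  rw [hF11, hF11_neg]
  refine hasSum_mul_tsum_pow (p := kummerCoeff a b) (q := fun n ↦ (-1) ^ n * kummerCoeff c d n)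
    (summable_norm_kummerCoeff_mul_pow a b x) ?_
  refine (summable_norm_kummerCoeff_mul_pow c d x).congr fun n ↦ ?_
  simp only [norm_mul, norm_pow, norm_neg, norm_one, one_pow, one_mul]

lemma kummerProdCoeff_succ_summand {α γ : ℝ} (hγ : ∀ k : ℤ, γ ≠ k) (k l : ℕ) :
    (k + 1) * (kummerCoeff α γ (k + 1) * ((-1) ^ l * kummerCoeff (1 - α) (1 - γ) l)) +
      (l + 1) * (kummerCoeff α γ k * ((-1) ^ (l + 1) * kummerCoeff (1 - α) (1 - γ) (l + 1))) =
    (k + l + 1) * ((γ - α) / (γ * (γ - 1))) *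
      (kummerCoeff α (γ + 1) k * ((-1) ^ l * kummerCoeff (1 - α) (2 - γ) l)) := by
  have hγ0 : γ ≠ 0 := fun h ↦ hγ 0 (by simpa using h)
  have hγ1 : 1 - γ ≠ 0 := fun h ↦ hγ 1 (by push_cast; linarith)
  have hγk : γ + k ≠ 0 := fun h ↦ hγ (-k) (by push_cast; linarith)
  have hγl : 1 - γ + l ≠ 0 := fun h ↦ hγ (l + 1) (by push_cast; linarith)
  have hγ1' : γ - 1 ≠ 0 := fun h ↦ hγ1 (by linarith)
  rw [show 2 - γ = 1 - γ + 1 by ring, kummerCoeff_add_one_right _ hγ0,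
    kummerCoeff_add_one_right _ hγ1, kummerCoeff_succ, kummerCoeff_succ, pow_succ]
  field_simp
  ring

lemma kummerProdCoeff_succ {α γ : ℝ} (hγ : ∀ k : ℤ, γ ≠ k) (n : ℕ) :
    kummerProdCoeff α γ (1 - α) (1 - γ) (n + 1) =
      (γ - α) / (γ * (γ - 1)) * kummerProdCoeff α (γ + 1) (1 - α) (2 - γ) n := by
  refine mul_left_cancel₀ (Nat.cast_add_one_ne_zero n : (n : ℝ) + 1 ≠ 0) ?_
  rw [kummerProdCoeff, succ_mul_sum_antidiagonal_succ
    (fun k l ↦ kummerCoeff α γ k * ((-1) ^ l * kummerCoeff (1 - α) (1 - γ) l)),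
    kummerProdCoeff, mul_sum, mul_sum]
  refine sum_congr rfl fun kl hkl ↦ ?_
  have hkl' : ((kl.1 : ℝ) + kl.2) = n := by exact_mod_cast mem_antidiagonal.mp hkl
  rw [kummerProdCoeff_succ_summand hγ, hkl', mul_assoc]

theorem Kummer_example2 (α γ : ℝ) (hγ : ∀ k : ℤ, γ ≠ (k : ℝ)) (t : ℝ) :
    F11 α γ t * F11 (1 - α) (1 - γ) (-t) -
      (γ - α) * t / (γ * (γ - 1)) * F11 (1 - α) (2 - γ) (-t) * F11 α (γ + 1) t = 1 := by
  set c := (γ - α) * t / (γ * (γ - 1))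
  have hfirst := (hasSum_nat_add_iff' 1).mpr (hasSum_kummerProdCoeff α γ (1 - α) (1 - γ) t)
  have hsecond := (hasSum_kummerProdCoeff α (γ + 1) (1 - α) (2 - γ) t).mul_left c
  have hshift : (fun n ↦ kummerProdCoeff α γ (1 - α) (1 - γ) (n + 1) * t ^ (n + 1)) =
      fun n ↦ c * (kummerProdCoeff α (γ + 1) (1 - α) (2 - γ) n * t ^ n) := by
    funext n
    rw [kummerProdCoeff_succ hγ, pow_succ]
    ring
  rw [hshift] at hfirst
  have hsum := hfirst.unique hsecond
  simp only [range_one, sum_singleton, kummerProdCoeff_zero, pow_zero, mul_one] at hsum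
  linear_combination hsum
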